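/- Let n ≥ 2, let (X,d) be a complete metric space with |X| ≥ n, and let T : X → X be a mapping contracting total pairwise distance on n points. If T has no periodic points of prime period k for any k ∈ {2,...,n−1}, then T has a fixed point. -/

import Mathlib

/-! Suppose `T` has no fixed point. Then a repetition among `x, Tx, …, T^{n-1}x` would produce a
point of prime period less than `n`, so each such orbit window consists of distinct
points and the contraction applies to it. Since the window of `Tx` is `T` applied to the window
of `x`, the total pairwise distance of the window of `T^k x` is at most `α^k` times that of `x`;
it bounds `d(T^k x, T^{k+1} x)`, so the orbit is Cauchy with some limit `x*`. The same decay
rules out periodic points of any period, so the orbit is injective, and for large `k` the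
`n` points `x*, T^k x, …, T^{k+n-2} x` are distinct. Contracting them gives
`d(T x*, T^{k+1} x) ≤ α · S(x*, T^k x, …) → 0`, hence `T x* = x*`. -/

noncomputable def totalS {X : Type*} [MetricSpace X] {n : ℕ} (x : Fin n → X) : ℝ :=
  ∑ i : Fin n, ∑ j ∈ Finset.Ioi i, dist (x i) (x j)

open Function Filter Topology

section TotalDist

variable {X : Type*} [MetricSpace X]

lemma dist_le_totalS {n : ℕ} (x : Fin n → X) {i j : Fin n} (h : i < j) :
    dist (x i) (x j) ≤ totalS x :=
  calc dist (x i) (x j) ≤ ∑ j' ∈ Finset.Ioi i, dist (x i) (x j') :=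
        Finset.single_le_sum (f := fun j' => dist (x i) (x j')) (fun _ _ => dist_nonneg)
          (Finset.mem_Ioi.2 h)
    _ ≤ totalS x :=
        Finset.single_le_sum (f := fun i => ∑ j' ∈ Finset.Ioi i, dist (x i) (x j'))
          (fun _ _ => Finset.sum_nonneg fun _ _ => dist_nonneg) (Finset.mem_univ i)

lemma continuous_totalS {n : ℕ} : Continuous (totalS : (Fin n → X) → ℝ) := by
  unfold totalS
  fun_prop

lemma totalS_const {n : ℕ} (x : X) : totalS (fun _ : Fin n => x) = 0 := by
  simp [totalS]

section Periodic

variable {Y : Type*} {f : Y → Y}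

def orbitWindow (f : Y → Y) (n : ℕ) (x : Y) : Fin n → Y := fun i => f^[i] x

lemma orbitWindow_apply_self (n : ℕ) (x : Y) : orbitWindow f n (f x) = f ∘ orbitWindow f n x :=
  funext fun i => by simp only [orbitWindow, comp_apply, ← iterate_succ_apply, iterate_succ_apply']

lemma Function.isPeriodicPt_of_iterate_eq {x : Y} {i j : ℕ} (hij : i ≤ j)
    (h : f^[i] x = f^[j] x) : IsPeriodicPt f (j - i) (f^[i] x) := by
  rw [IsPeriodicPt, IsFixedPt, ← iterate_add_apply, Nat.sub_add_cancel hij, h]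

lemma injective_orbitWindow {n : ℕ} (h : ∀ k, 0 < k → k < n → ∀ y, ¬IsPeriodicPt f k y)
    (x : Y) : Injective (orbitWindow f n x) :=
  Injective.of_lt_imp_ne fun i j hij heq =>
    h (j - i) (by omega) (by omega) _ (isPeriodicPt_of_iterate_eq hij.le heq)

lemma Function.injective_iterate_of_not_isPeriodicPt (h : ∀ k, 0 < k → ∀ y, ¬IsPeriodicPt f k y)
    (x : Y) : Injective fun k => f^[k] x :=
  Injective.of_lt_imp_ne fun i j hij heq =>
    h (j - i) (by omega) _ (isPeriodicPt_of_iterate_eq hij.le heq)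

lemma not_isPeriodicPt_of_no_prime_period {n : ℕ} (hfix : ∀ x, f x ≠ x)
    (hper : ∀ (x : Y) (k : ℕ), 2 ≤ k → k ≤ n - 1 →
      ¬(f^[k] x = x ∧ ∀ j : ℕ, 1 ≤ j → j < k → f^[j] x ≠ x))
    {k : ℕ} (hk : 0 < k) (hkn : k < n) (x : Y) : ¬IsPeriodicPt f k x := by
  intro hx
  have hpos := hx.minimalPeriod_pos hk
  have hle := hx.minimalPeriod_le hk
  have hne : minimalPeriod f x ≠ 1 := fun h => hfix x (minimalPeriod_eq_one_iff_isFixedPt.1 h)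
  exact hper x _ (by omega) (by omega)
    ⟨iterate_minimalPeriod, fun _ hj hjm =>
      not_isPeriodicPt_of_pos_of_lt_minimalPeriod (by omega) hjm⟩

end Periodic

lemma dist_le_totalS_orbitWindow {m : ℕ} (T : X → X) (x : X) :
    dist x (T x) ≤ totalS (orbitWindow T (m + 2) x) :=
  dist_le_totalS (orbitWindow T (m + 2) x) (i := 0) (j := 1) Fin.zero_lt_one

def ContractsTotalDist (n : ℕ) (α : ℝ) (T : X → X) : Prop :=
  ∀ x : Fin n → X, Injective x → totalS (T ∘ x) ≤ α * totalS x

namespace ContractsTotalDist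

variable {m : ℕ} {α : ℝ} {T : X → X}

lemma isFixedPt_of_tendsto_iterate (hT : ContractsTotalDist (m + 2) α T) {x x' : X}
    (hinj : Injective fun k => T^[k] x) (hlim : Tendsto (fun k => T^[k] x) atTop (𝓝 x')) :
    IsFixedPt T x' := by
  set u : ℕ → Fin (m + 2) → X := fun k => Fin.cons x' fun i : Fin (m + 1) => T^[k + i] x
  have hne : ∀ᶠ k in atTop, T^[k] x ≠ x' :=
    Nat.cofinite_eq_atTop ▸ hinj.tendsto_cofinite.eventually (eventually_cofinite_ne x')
  obtain ⟨K, hK⟩ := eventually_atTop.1 hne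
  have hu_inj : ∀ k ≥ K, Injective (u k) := fun k hk =>
    Fin.cons_injective_iff.2 ⟨fun ⟨i, hi⟩ => hK (k + i) (by omega) hi,
      fun i j hij => Fin.ext (by simpa using hinj hij)⟩
  have hu_lim : Tendsto u atTop (𝓝 fun _ => x') := by
    refine tendsto_pi_nhds.2 (Fin.cases ?_ fun i => ?_)
    · simp [u]
    · simpa [u, comp_def] using hlim.comp (tendsto_add_atTop_nat i)
  have hS : Tendsto (fun k => α * totalS (u k)) atTop (𝓝 0) := by
    simpa [totalS_const] using ((continuous_totalS.tendsto _).comp hu_lim).const_mul α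
  have hdist : ∀ k ≥ K, dist (T^[k + 1] x) (T x') ≤ α * totalS (u k) := fun k hk => by
    have := (dist_le_totalS (T ∘ u k) Fin.zero_lt_one).trans (hT _ (hu_inj k hk))
    simpa [u, dist_comm, iterate_succ_apply'] using this
  have hTx' : Tendsto (fun k => T^[k + 1] x) atTop (𝓝 (T x')) :=
    tendsto_iff_dist_tendsto_zero.2 <| squeeze_zero' (.of_forall fun _ => dist_nonneg)
      (eventually_atTop.2 ⟨K, hdist⟩) hS
  exact tendsto_nhds_unique hTx' (hlim.comp (tendsto_add_atTop_nat 1))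

variable (hT : ContractsTotalDist (m + 2) α T) (hα : 0 ≤ α)
  (hwin : ∀ x, Injective (orbitWindow T (m + 2) x))
include hT hα hwin

lemma totalS_orbitWindow_iterate_le (x : X) (k : ℕ) :
    totalS (orbitWindow T (m + 2) (T^[k] x)) ≤ α ^ k * totalS (orbitWindow T (m + 2) x) := by
  induction k with
  | zero => simp
  | succ k ih =>
    calc totalS (orbitWindow T (m + 2) (T^[k + 1] x))
        = totalS (T ∘ orbitWindow T (m + 2) (T^[k] x)) := by
          rw [iterate_succ_apply', orbitWindow_apply_self]
      _ ≤ α * totalS (orbitWindow T (m + 2) (T^[k] x)) := hT _ (hwin _)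
      _ ≤ α * (α ^ k * totalS (orbitWindow T (m + 2) x)) := mul_le_mul_of_nonneg_left ih hα
      _ = α ^ (k + 1) * totalS (orbitWindow T (m + 2) x) := by ring

lemma cauchySeq_iterate (hα1 : α < 1) (x : X) : CauchySeq fun k => T^[k] x :=
  cauchySeq_of_le_geometric α (totalS (orbitWindow T (m + 2) x)) hα1 fun k =>
    calc dist (T^[k] x) (T^[k + 1] x) = dist (T^[k] x) (T (T^[k] x)) := by
          rw [iterate_succ_apply']
      _ ≤ totalS (orbitWindow T (m + 2) (T^[k] x)) := dist_le_totalS_orbitWindow T _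
      _ ≤ α ^ k * totalS (orbitWindow T (m + 2) x) := hT.totalS_orbitWindow_iterate_le hα hwin x k
      _ = totalS (orbitWindow T (m + 2) x) * α ^ k := mul_comm _ _

lemma not_isPeriodicPt (hα1 : α < 1) (hfix : ∀ x, T x ≠ x) {p : ℕ} (hp : 0 < p) (x : X) :
    ¬IsPeriodicPt T p x := by
  intro hx
  have hpos : 0 < totalS (orbitWindow T (m + 2) x) :=
    (dist_pos.2 (hfix x).symm).trans_le (dist_le_totalS_orbitWindow T x)
  have hle := hT.totalS_orbitWindow_iterate_le hα hwin x p
  rw [hx.eq] at hle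
  have : α ^ p < 1 := pow_lt_one₀ hα hα1 hp.ne'
  nlinarith

end ContractsTotalDist

end TotalDist

theorem stmt_5 {X : Type*} [MetricSpace X] [CompleteSpace X] (n : ℕ) (hn : 2 ≤ n)
    (hcard : ∃ f : Fin n → X, Function.Injective f)
    (T : X → X)
    (hT : ∃ α : ℝ, 0 ≤ α ∧ α < 1 ∧
      ∀ x : Fin n → X, Function.Injective x → totalS (T ∘ x) ≤ α * totalS x)
    (hper : ∀ (x : X) (k : ℕ), 2 ≤ k → k ≤ n - 1 →
      ¬(T^[k] x = x ∧ ∀ j : ℕ, 1 ≤ j → j < k → T^[j] x ≠ x)) :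
    ∃ x : X, T x = x := by
  obtain ⟨m, rfl⟩ : ∃ m, n = m + 2 := ⟨n - 2, by omega⟩
  obtain ⟨α, hα, hα1, hT : ContractsTotalDist (m + 2) α T⟩ := hT
  obtain ⟨f, -⟩ := hcard
  by_contra! hfix
  have hwin : ∀ x, Injective (orbitWindow T (m + 2) x) :=
    injective_orbitWindow fun _ hk hkn => not_isPeriodicPt_of_no_prime_period hfix hper hk hkn
  have hinj : Injective fun k => T^[k] (f 0) :=
    injective_iterate_of_not_isPeriodicPt (fun _ hp => hT.not_isPeriodicPt hα hwin hα1 hfix hp) _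
  obtain ⟨x', hx'⟩ := cauchySeq_tendsto_of_complete (hT.cauchySeq_iterate hα hwin hα1 (f 0))
  exact hfix x' (hT.isFixedPt_of_tendsto_iterate hinj hx')
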